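/- Let Q ⊆ ℝ^n be open, Γ^i_{jk} : Q → ℝ smooth Christoffel symbols, and Y_1, …, Y_m : Q → ℝ^n smooth vector fields with smooth functions α_{ab} : Q → ℝ satisfying ⟨Y_a : Y_a⟩ = Σ_{b=1}^m α_{ab} Y_b for each a. Fix an injective map N from {(a, b) : 1 ≤ a < b ≤ m} into the positive integers, functions z_a : ℝ → ℝ and z_{bc} : ℝ → ℝ (b < c), set ψ_K(τ) = √2 · K · cos(Kτ), w_a(τ, t) = −Σ_{c<a} ψ_{N(c,a)}(τ) + Σ_{c>a} z_{ac}(t) ψ_{N(a,c)}(τ), and v_a(t, q) = z_a(t) + (1/2) Σ_{b=1}^m α_{ba}(q)((b − 1) + Σ_{c>b} z_{bc}(t)²). Let Ū denote the averaged multinomial iterated integrals of w_1, …, w_m with period T = 2π. Then for all t and all q ∈ Q, the averaged forcing satisfies the identity Σ_{a=1}^m v_a(t, q) Y_a(q) + Σ_{a=1}^m ((1/2) Ū_{k⃗_a}(t)² − Ū_{k⃗_{aa}}(t)) ⟨Y_a : Y_a⟩(q) + Σ_{a<b} (Ū_{k⃗_a}(t) Ū_{k⃗_b}(t) − Ū_{k⃗_{ab}}(t))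 ⟨Y_a : Y_b⟩(q) = Σ_{a=1}^m z_a(t) Y_a(q) + Σ_{a<b} z_{ab}(t) ⟨Y_a : Y_b⟩(q); that is, with these choices of oscillatory inputs w_a and compensating inputs v_a, the averaged mechanical system takes the form ∇_ṙ ṙ = Y_0(r) + k(r)(ṙ) + Σ_a z_a(t) Y_a(r) + Σ_{b<c} z_{bc}(t) ⟨Y_b : Y_c⟩(r). -/

import Mathlib

open scoped BigOperators Real

noncomputable section

/-- `Γ(q)(v,w)` is the vector with `i`-th component `Γ^i_{jk}(q) v^j w^k`. -/
def christoffelOp (n : ℕ) (Γ : (Fin n → ℝ) → Fin n → Fin n → Fin n → ℝ)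
    (q v w : Fin n → ℝ) : Fin n → ℝ :=
  fun i => ∑ j, ∑ k, Γ q i j k * v j * w k

/-- The symmetric product `⟨Y_a : Y_b⟩`. -/
def symProd (n : ℕ) (Γ : (Fin n → ℝ) → Fin n → Fin n → Fin n → ℝ)
    (Ya Yb : (Fin n → ℝ) → (Fin n → ℝ)) : (Fin n → ℝ) → (Fin n → ℝ) :=
  fun q => fderiv ℝ Ya q (Yb q) + fderiv ℝ Yb q (Ya q)
    + christoffelOp n Γ q (Ya q) (Yb q) + christoffelOp n Γ q (Yb q) (Ya q)

/-- The averaged multinomial iterated integral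
`Ū_{k_1,…,k_m}(t) = (1/(T k_1! ⋯ k_m!)) ∫_0^T Π_a (∫_0^s u_a(τ, t) dτ)^{k_a} ds`. -/
def avgIterInt (m : ℕ) (u : Fin m → ℝ → ℝ → ℝ) (T : ℝ) (k : Fin m → ℕ)
    (t : ℝ) : ℝ :=
  (T * ∏ a, (Nat.factorial (k a) : ℝ))⁻¹ *
    ∫ s in (0:ℝ)..T, ∏ a, (∫ τ in (0:ℝ)..s, u a τ t) ^ (k a)

/-- `ψ_K(τ) = √2 · K · cos(Kτ)`. -/
def psiOsc (K : ℕ) (τ : ℝ) : ℝ := Real.sqrt 2 * (K : ℝ) * Real.cos ((K : ℝ) * τ)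

/-- The oscillatory inputs
`w_a(τ, t) = −Σ_{c<a} ψ_{N(c,a)}(τ) + Σ_{c>a} z_{ac}(t) ψ_{N(a,c)}(τ)`. -/
def oscInput (m : ℕ) (N : Fin m → Fin m → ℕ) (z : Fin m → Fin m → ℝ → ℝ)
    (a : Fin m) (τ t : ℝ) : ℝ :=
  -(∑ c ∈ Finset.univ.filter (fun c => c < a), psiOsc (N c a) τ)
    + ∑ c ∈ Finset.univ.filter (fun c => a < c), z a c t * psiOsc (N a c) τ


section AuxLemmas
open Real MeasureTheory

-- Auxiliary trigonometric integral lemmas.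
lemma int_cos_ne (M : ℝ) (h : M ≠ 0) :
    ∫ s in (0:ℝ)..2*π, Real.cos (M*s) = Real.sin (M*(2*π)) / M := by
  rw [intervalIntegral.integral_comp_mul_left _ h]
  simp [integral_cos, div_eq_inv_mul]

lemma int_cos_int (K : ℤ) :
    ∫ s in (0:ℝ)..2*π, Real.cos ((K:ℝ)*s) = if K = 0 then 2*π else 0 := by
  split_ifs with h
  · simp [h]
  · rw [int_cos_ne _ (by exact_mod_cast h)]
    have : Real.sin ((K:ℝ)*(2*π)) = 0 := by
      have := Real.sin_int_mul_pi (2*K)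
      push_cast at this ⊢
      rw [← this]; ring_nf
    simp [this]

lemma int_sin_nat (K : ℕ) :
    ∫ s in (0:ℝ)..2*π, Real.sin ((K:ℝ)*s) = 0 := by
  rcases Nat.eq_zero_or_pos K with h | h
  · simp [h]
  · have hK : (K:ℝ) ≠ 0 := by positivity
    rw [intervalIntegral.integral_comp_mul_left _ hK]
    have : Real.cos ((K:ℝ)*(2*π)) = 1 := by
      simpa [mul_comm] using Real.cos_nat_mul_two_pi K
    simp [integral_sin, this]

lemma int_sin_mul_sin (K L : ℕ) (hK : 0 < K) (hL : 0 < L) :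
    ∫ s in (0:ℝ)..2*π, Real.sin ((K:ℝ)*s) * Real.sin ((L:ℝ)*s)
      = if K = L then π else 0 := by
  have hpt : ∀ s : ℝ, Real.sin ((K:ℝ)*s) * Real.sin ((L:ℝ)*s)
      = (Real.cos ((((K:ℤ) - L : ℤ):ℝ)*s) - Real.cos ((((K:ℤ) + L : ℤ):ℝ)*s)) / 2 := by
    intro s
    rw [Real.cos_sub_cos]
    push_cast
    have h1 : (((K:ℝ) - L)*s + ((K:ℝ)+L)*s)/2 = (K:ℝ)*s := by ring
    have h2 : (((K:ℝ) - L)*s - ((K:ℝ)+L)*s)/2 = -((L:ℝ)*s) := by ring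
    rw [h1, h2, Real.sin_neg]
    ring
  rw [intervalIntegral.integral_congr (g := fun s => (Real.cos ((((K:ℤ) - L : ℤ):ℝ)*s) - Real.cos ((((K:ℤ) + L : ℤ):ℝ)*s)) / 2) (fun s _ => hpt s)]
  have h1 : IntervalIntegrable (fun s => Real.cos ((((K:ℤ) - L : ℤ):ℝ)*s)) volume 0 (2*π) :=
    (Real.continuous_cos.comp (continuous_const.mul continuous_id)).intervalIntegrable _ _
  have h2 : IntervalIntegrable (fun s => Real.cos ((((K:ℤ) + L : ℤ):ℝ)*s)) volume 0 (2*π) :=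
    (Real.continuous_cos.comp (continuous_const.mul continuous_id)).intervalIntegrable _ _
  rw [intervalIntegral.integral_div, intervalIntegral.integral_sub h1 h2,
    int_cos_int, int_cos_int]
  have hKL : (K:ℤ) + L ≠ 0 := by positivity
  rw [if_neg hKL]
  by_cases h : K = L
  · rw [if_pos (by omega : (K:ℤ) - L = 0), if_pos h]; ring
  · rw [if_neg (by omega : ¬((K:ℤ) - L = 0)), if_neg h]; ring

-- coefficient machinery from t2
def pairS (m : ℕ) : Finset (Fin m × Fin m) := Finset.univ.filter fun p => p.1 < p.2

def coefW (m : ℕ) (zz : Fin m → Fin m → ℝ → ℝ) (t : ℝ) (a : Fin m)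
    (p : Fin m × Fin m) : ℝ :=
  if p.2 = a then -1 else if p.1 = a then zz p.1 p.2 t else 0

lemma sum_coef (m : ℕ) (zz : Fin m → Fin m → ℝ → ℝ) (t : ℝ) (a : Fin m)
    (F : Fin m × Fin m → ℝ) :
    ∑ p ∈ pairS m, coefW m zz t a p * F p
    = -(∑ c ∈ Finset.univ.filter (fun c => c < a), F (c, a))
      + ∑ c ∈ Finset.univ.filter (fun c => a < c), zz a c t * F (a, c) := by
  rw [pairS, Finset.sum_filter, Fintype.sum_prod_type]
  have key : ∀ c d : Fin m,
      (if (c,d).1 < (c,d).2 then coefW m zz t a (c,d) * F (c,d) else 0)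
      = (if d = a then (if c < a then -F (c,a) else 0) else 0)
        + (if c = a then (if a < d then zz c d t * F (c,d) else 0) else 0) := by
    intro c d
    simp only [coefW]
    by_cases hd : d = a <;> by_cases hc : c = a <;>
      subst_vars <;> simp [lt_irrefl] <;> split_ifs <;> ring
  simp only [key, Finset.sum_add_distrib, Finset.sum_ite_eq',
    Finset.mem_univ, if_true, Finset.sum_ite_irrel, Finset.sum_const_zero]
  rw [← Finset.sum_filter, ← Finset.sum_filter, Finset.sum_neg_distrib]

lemma sum_coef_diag (m : ℕ) (zz : Fin m → Fin m → ℝ → ℝ) (t : ℝ) (a : Fin m) :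
    ∑ p ∈ pairS m, coefW m zz t a p * coefW m zz t a p
    = ((a : ℕ) : ℝ) + ∑ c ∈ Finset.univ.filter (fun c => a < c), zz a c t ^ 2 := by
  rw [sum_coef]
  have h1 : ∀ c ∈ Finset.univ.filter (fun c => c < a),
      coefW m zz t a (c, a) = -1 := by
    intro c _; simp [coefW]
  have h2 : ∀ c ∈ Finset.univ.filter (fun c => a < c),
      zz a c t * coefW m zz t a (a, c) = zz a c t ^ 2 := by
    intro c hc
    simp only [Finset.mem_filter] at hc
    have : ¬ c = a := ne_of_gt hc.2
    simp [coefW, this]; ring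
  rw [Finset.sum_congr rfl h1, Finset.sum_congr rfl h2, Finset.sum_const]
  have hcard : (Finset.univ.filter (fun c => c < a)).card = (a : ℕ) := by
    rw [show Finset.univ.filter (fun c => c < a) = Finset.Iio a from by ext c; simp]
    exact Fin.card_Iio a
  simp [hcard]

lemma sum_coef_off (m : ℕ) (zz : Fin m → Fin m → ℝ → ℝ) (t : ℝ) (a b : Fin m)
    (hab : a < b) :
    ∑ p ∈ pairS m, coefW m zz t a p * coefW m zz t b p = -(zz a b t) := by
  rw [sum_coef]
  have h1 : ∀ c ∈ Finset.univ.filter (fun c => c < a),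
      coefW m zz t b (c, a) = 0 := by
    intro c hc
    simp only [Finset.mem_filter] at hc
    have hab' : ¬ a = b := ne_of_lt hab
    have hcb : ¬ c = b := ne_of_lt (hc.2.trans hab)
    simp [coefW, hab', hcb]
  have h2 : ∀ c ∈ Finset.univ.filter (fun c => a < c),
      zz a c t * coefW m zz t b (a, c) = if c = b then -(zz a c t) else 0 := by
    intro c hc
    have hab' : ¬ a = b := ne_of_lt hab
    by_cases hcb : c = b <;> simp [coefW, hcb, hab']
  rw [Finset.sum_congr rfl h1, Finset.sum_congr rfl h2]
  rw [Finset.sum_ite_eq' (Finset.univ.filter (fun c => a < c)) b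
    (fun c => -(zz a c t))]
  simp [hab]

-- analytic lemmas
lemma psi_int (K : ℕ) (hK : 0 < K) (s : ℝ) :
    ∫ τ in (0:ℝ)..s, psiOsc K τ = Real.sqrt 2 * Real.sin ((K:ℝ)*s) := by
  unfold psiOsc
  have hK' : (K:ℝ) ≠ 0 := by positivity
  rw [intervalIntegral.integral_const_mul, intervalIntegral.integral_comp_mul_left _ hK']
  simp [integral_cos]
  field_simp

lemma W_rep (m : ℕ) (N : Fin m → Fin m → ℕ) (hNpos : ∀ a b : Fin m, a < b → 0 < N a b)
    (zz : Fin m → Fin m → ℝ → ℝ) (t : ℝ) (a : Fin m) (s : ℝ) :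
    ∫ τ in (0:ℝ)..s, oscInput m N zz a τ t
    = ∑ p ∈ pairS m, coefW m zz t a p * (Real.sqrt 2 * Real.sin ((N p.1 p.2 : ℝ)*s)) := by
  rw [sum_coef m zz t a (fun p => Real.sqrt 2 * Real.sin ((N p.1 p.2 : ℝ)*s))]
  unfold oscInput
  have hcont : ∀ K : ℕ, Continuous (psiOsc K) := by
    intro K; unfold psiOsc; fun_prop
  have h1 : IntervalIntegrable
      (fun τ => -(∑ c ∈ Finset.univ.filter (fun c => c < a), psiOsc (N c a) τ))
      volume 0 s :=
    ((continuous_finset_sum _ fun c _ => hcont _).neg).intervalIntegrable _ _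
  have h2 : IntervalIntegrable
      (fun τ => ∑ c ∈ Finset.univ.filter (fun c => a < c), zz a c t * psiOsc (N a c) τ)
      volume 0 s :=
    (continuous_finset_sum _ fun c _ => continuous_const.mul (hcont _)).intervalIntegrable _ _
  rw [intervalIntegral.integral_add h1 h2, intervalIntegral.integral_neg,
    intervalIntegral.integral_finset_sum (fun c _ => (hcont _).intervalIntegrable _ _),
    intervalIntegral.integral_finset_sum (f := fun c τ => zz a c t * psiOsc (N a c) τ)
      (fun c _ => (continuous_const.mul (hcont _)).intervalIntegrable _ _)]
  congr 1
  · congr 1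
    refine Finset.sum_congr rfl fun c hc => ?_
    simp only [Finset.mem_filter] at hc
    exact psi_int _ (hNpos _ _ hc.2) s
  · refine Finset.sum_congr rfl fun c hc => ?_
    simp only [Finset.mem_filter] at hc
    rw [intervalIntegral.integral_const_mul, psi_int _ (hNpos _ _ hc.2) s]

lemma ortho (m : ℕ) (N : Fin m → Fin m → ℕ) (hNpos : ∀ a b : Fin m, a < b → 0 < N a b)
    (hNinj : ∀ a b a' b' : Fin m, a < b → a' < b' → N a b = N a' b' → a = a' ∧ b = b')
    (p p' : Fin m × Fin m) (hp : p ∈ pairS m) (hp' : p' ∈ pairS m) :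
    ∫ s in (0:ℝ)..2*π,
      (Real.sqrt 2 * Real.sin ((N p.1 p.2 : ℝ)*s)) * (Real.sqrt 2 * Real.sin ((N p'.1 p'.2 : ℝ)*s))
      = if p = p' then 2*π else 0 := by
  have hp1 : p.1 < p.2 := by simpa [pairS] using hp
  have hp1' : p'.1 < p'.2 := by simpa [pairS] using hp'
  have h2 : Real.sqrt 2 * Real.sqrt 2 = 2 := Real.mul_self_sqrt (by norm_num)
  have hpt : ∀ s : ℝ,
      (Real.sqrt 2 * Real.sin ((N p.1 p.2 : ℝ)*s)) * (Real.sqrt 2 * Real.sin ((N p'.1 p'.2 : ℝ)*s))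
      = 2 * (Real.sin ((N p.1 p.2 : ℝ)*s) * Real.sin ((N p'.1 p'.2 : ℝ)*s)) := by
    intro s; rw [mul_mul_mul_comm, h2]
  rw [intervalIntegral.integral_congr (fun s _ => hpt s),
    intervalIntegral.integral_const_mul,
    int_sin_mul_sin _ _ (hNpos _ _ hp1) (hNpos _ _ hp1')]
  by_cases h : p = p'
  · rw [if_pos (by rw [h]), if_pos h]
  · have hN : ¬ ((N p.1 p.2 : ℕ) = N p'.1 p'.2) := fun hh =>
      h (Prod.ext (hNinj _ _ _ _ hp1 hp1' hh).1 (hNinj _ _ _ _ hp1 hp1' hh).2)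
    rw [if_neg hN, if_neg h, mul_zero]

lemma int_W_zero (m : ℕ) (N : Fin m → Fin m → ℕ)
    (hNpos : ∀ a b : Fin m, a < b → 0 < N a b)
    (zz : Fin m → Fin m → ℝ → ℝ) (t : ℝ) (a : Fin m) :
    ∫ s in (0:ℝ)..2*π, (∫ τ in (0:ℝ)..s, oscInput m N zz a τ t) = 0 := by
  rw [intervalIntegral.integral_congr (fun s _ => W_rep m N hNpos zz t a s)]
  rw [intervalIntegral.integral_finset_sum (fun p _ =>
    Continuous.intervalIntegrable (by fun_prop) _ _)]
  refine Finset.sum_eq_zero fun p _ => ?_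
  rw [intervalIntegral.integral_const_mul, intervalIntegral.integral_const_mul,
    int_sin_nat]
  ring

lemma int_WW (m : ℕ) (N : Fin m → Fin m → ℕ)
    (hNpos : ∀ a b : Fin m, a < b → 0 < N a b)
    (hNinj : ∀ a b a' b' : Fin m, a < b → a' < b' → N a b = N a' b' → a = a' ∧ b = b')
    (zz : Fin m → Fin m → ℝ → ℝ) (t : ℝ) (a b : Fin m) :
    ∫ s in (0:ℝ)..2*π,
      (∫ τ in (0:ℝ)..s, oscInput m N zz a τ t) * (∫ τ in (0:ℝ)..s, oscInput m N zz b τ t)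
      = 2*π * ∑ p ∈ pairS m, coefW m zz t a p * coefW m zz t b p := by
  have hpt : ∀ s : ℝ,
      (∫ τ in (0:ℝ)..s, oscInput m N zz a τ t) * (∫ τ in (0:ℝ)..s, oscInput m N zz b τ t)
      = ∑ p ∈ pairS m, ∑ p' ∈ pairS m,
          (coefW m zz t a p * coefW m zz t b p') *
          ((Real.sqrt 2 * Real.sin ((N p.1 p.2 : ℝ)*s)) * (Real.sqrt 2 * Real.sin ((N p'.1 p'.2 : ℝ)*s))) := by
    intro s
    rw [W_rep m N hNpos zz t a s, W_rep m N hNpos zz t b s, Finset.sum_mul_sum]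
    refine Finset.sum_congr rfl fun p _ => Finset.sum_congr rfl fun p' _ => by ring
  rw [intervalIntegral.integral_congr (fun s _ => hpt s)]
  rw [intervalIntegral.integral_finset_sum (fun p _ =>
    Continuous.intervalIntegrable
      (continuous_finset_sum _ fun p' _ => by fun_prop) _ _)]
  have step : ∀ p ∈ pairS m,
      (∫ s in (0:ℝ)..2*π, ∑ p' ∈ pairS m,
        (coefW m zz t a p * coefW m zz t b p') *
        ((Real.sqrt 2 * Real.sin ((N p.1 p.2 : ℝ)*s)) * (Real.sqrt 2 * Real.sin ((N p'.1 p'.2 : ℝ)*s))))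
      = coefW m zz t a p * coefW m zz t b p * (2*π) := by
    intro p hp
    rw [intervalIntegral.integral_finset_sum (fun p' _ =>
      Continuous.intervalIntegrable (by fun_prop) _ _)]
    have : ∀ p' ∈ pairS m,
        (∫ s in (0:ℝ)..2*π,
          (coefW m zz t a p * coefW m zz t b p') *
          ((Real.sqrt 2 * Real.sin ((N p.1 p.2 : ℝ)*s)) * (Real.sqrt 2 * Real.sin ((N p'.1 p'.2 : ℝ)*s))))
        = if p' = p then coefW m zz t a p * coefW m zz t b p' * (2*π) else 0 := by
      intro p' hp'
      rw [intervalIntegral.integral_const_mul, ortho m N hNpos hNinj p p' hp hp']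
      by_cases h : p' = p
      · rw [if_pos (by rw [h]), if_pos h]
      · rw [if_neg (fun hh => h hh.symm), if_neg h, mul_zero]
    rw [Finset.sum_congr rfl this, Finset.sum_ite_eq' (pairS m) p
      (fun p' => coefW m zz t a p * coefW m zz t b p' * (2*π)), if_pos hp]
  rw [Finset.sum_congr rfl step, ← Finset.sum_mul]
  ring

lemma prod_pow_single (m : ℕ) (f : Fin m → ℝ) (a : Fin m) :
    ∏ c, f c ^ (Pi.single a 1 : Fin m → ℕ) c = f a := by
  rw [Finset.prod_eq_single a (fun b _ hb => by rw [Pi.single_eq_of_ne hb, pow_zero])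
    (fun h => absurd (Finset.mem_univ a) h)]
  rw [Pi.single_eq_same, pow_one]

lemma fact_single (m : ℕ) (a : Fin m) :
    ∏ c, (Nat.factorial ((Pi.single a 1 : Fin m → ℕ) c) : ℝ) = 1 := by
  refine Finset.prod_eq_one fun c _ => ?_
  rcases eq_or_ne c a with h | h
  · subst h; simp [Pi.single_eq_same]
  · simp [Pi.single_eq_of_ne h]

lemma fact_double (m : ℕ) (a : Fin m) :
    ∏ c, (Nat.factorial (((Pi.single a 1 + Pi.single a 1) : Fin m → ℕ) c) : ℝ) = 2 := by
  rw [Finset.prod_eq_single a (fun b _ hb => by simp [Pi.single_eq_of_ne hb])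
    (fun h => absurd (Finset.mem_univ a) h)]
  simp [Pi.single_eq_same]

lemma fact_off (m : ℕ) (a b : Fin m) (hab : a ≠ b) :
    ∏ c, (Nat.factorial (((Pi.single a 1 + Pi.single b 1) : Fin m → ℕ) c) : ℝ) = 1 := by
  refine Finset.prod_eq_one fun c _ => ?_
  rcases eq_or_ne c a with h | h <;> rcases eq_or_ne c b with h' | h'
  · exact absurd (h ▸ h' : a = b) hab
  · subst h
    have hv : ((Pi.single c 1 + Pi.single b 1) : Fin m → ℕ) c = 1 := by
      rw [Pi.add_apply, Pi.single_eq_same, Pi.single_eq_of_ne h']; norm_num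
    rw [hv]; norm_num
  · subst h'
    have hv : ((Pi.single a 1 + Pi.single c 1) : Fin m → ℕ) c = 1 := by
      rw [Pi.add_apply, Pi.single_eq_same, Pi.single_eq_of_ne h]
    rw [hv]; norm_num
  · simp [Pi.single_eq_of_ne h, Pi.single_eq_of_ne h']

lemma avg_single_eq (m : ℕ) (N : Fin m → Fin m → ℕ)
    (hNpos : ∀ a b : Fin m, a < b → 0 < N a b)
    (zz : Fin m → Fin m → ℝ → ℝ) (t : ℝ) (a : Fin m) :
    avgIterInt m (oscInput m N zz) (2*π) (Pi.single a 1) t = 0 := by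
  unfold avgIterInt
  have h1 : ∀ s : ℝ,
      (∏ c, (∫ τ in (0:ℝ)..s, oscInput m N zz c τ t) ^ (Pi.single a 1 : Fin m → ℕ) c)
      = ∫ τ in (0:ℝ)..s, oscInput m N zz a τ t :=
    fun s => prod_pow_single m _ a
  rw [intervalIntegral.integral_congr (fun s _ => h1 s), int_W_zero m N hNpos zz t a,
    mul_zero]

lemma avg_double_eq (m : ℕ) (N : Fin m → Fin m → ℕ)
    (hNpos : ∀ a b : Fin m, a < b → 0 < N a b)
    (hNinj : ∀ a b a' b' : Fin m, a < b → a' < b' → N a b = N a' b' → a = a' ∧ b = b')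
    (zz : Fin m → Fin m → ℝ → ℝ) (t : ℝ) (a : Fin m) :
    avgIterInt m (oscInput m N zz) (2*π) (Pi.single a 1 + Pi.single a 1) t
      = 1/2 * (((a : ℕ) : ℝ) + ∑ c ∈ Finset.univ.filter (fun c => a < c), zz a c t ^ 2) := by
  unfold avgIterInt
  have h1 : ∀ s : ℝ,
      (∏ c, (∫ τ in (0:ℝ)..s, oscInput m N zz c τ t)
          ^ ((Pi.single a 1 + Pi.single a 1) : Fin m → ℕ) c)
      = (∫ τ in (0:ℝ)..s, oscInput m N zz a τ t)
        * (∫ τ in (0:ℝ)..s, oscInput m N zz a τ t) := by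
    intro s
    simp only [Pi.add_apply, pow_add, Finset.prod_mul_distrib, prod_pow_single]
  rw [intervalIntegral.integral_congr (fun s _ => h1 s),
    int_WW m N hNpos hNinj zz t a a, sum_coef_diag, fact_double]
  have hπ : (π:ℝ) ≠ 0 := Real.pi_ne_zero
  field_simp

lemma avg_off_eq (m : ℕ) (N : Fin m → Fin m → ℕ)
    (hNpos : ∀ a b : Fin m, a < b → 0 < N a b)
    (hNinj : ∀ a b a' b' : Fin m, a < b → a' < b' → N a b = N a' b' → a = a' ∧ b = b')
    (zz : Fin m → Fin m → ℝ → ℝ) (t : ℝ) (a b : Fin m) (hab : a < b) :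
    avgIterInt m (oscInput m N zz) (2*π) (Pi.single a 1 + Pi.single b 1) t
      = -(zz a b t) := by
  unfold avgIterInt
  have h1 : ∀ s : ℝ,
      (∏ c, (∫ τ in (0:ℝ)..s, oscInput m N zz c τ t)
          ^ ((Pi.single a 1 + Pi.single b 1) : Fin m → ℕ) c)
      = (∫ τ in (0:ℝ)..s, oscInput m N zz a τ t)
        * (∫ τ in (0:ℝ)..s, oscInput m N zz b τ t) := by
    intro s
    simp only [Pi.add_apply, pow_add, Finset.prod_mul_distrib, prod_pow_single]
  rw [intervalIntegral.integral_congr (fun s _ => h1 s),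
    int_WW m N hNpos hNinj zz t a b, sum_coef_off m zz t a b hab,
    fact_off m a b (ne_of_lt hab)]
  have hπ : (π:ℝ) ≠ 0 := Real.pi_ne_zero
  field_simp


end AuxLemmas

/-- with the oscillatory inputs `w_a` and compensating inputs
`v_a`, the total averaged forcing reduces to
`Σ_a z_a Y_a + Σ_{a<b} z_{ab} ⟨Y_a : Y_b⟩`, so that the averaged mechanical
system takes the form
`∇_ṙ ṙ = Y_0(r) + k(r)(ṙ) + Σ_a z_a(t) Y_a(r) + Σ_{b<c} z_{bc}(t) ⟨Y_b : Y_c⟩(r)`. -/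
theorem averaged_forcing_identity (n m : ℕ)
    (Q : Set (Fin n → ℝ)) (hQ : IsOpen Q)
    (Γ : (Fin n → ℝ) → Fin n → Fin n → Fin n → ℝ)
    (hΓ : ∀ i j k : Fin n, ContDiffOn ℝ (⊤ : ℕ∞) (fun q => Γ q i j k) Q)
    (Y : Fin m → (Fin n → ℝ) → (Fin n → ℝ))
    (hY : ∀ a, ContDiffOn ℝ (⊤ : ℕ∞) (Y a) Q)
    (α : Fin m → Fin m → (Fin n → ℝ) → ℝ)
    (hα : ∀ a b, ContDiffOn ℝ (⊤ : ℕ∞) (α a b) Q)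
    (hsym : ∀ a, ∀ q ∈ Q, symProd n Γ (Y a) (Y a) q = ∑ b, α a b q • Y b q)
    (N : Fin m → Fin m → ℕ)
    (hNpos : ∀ a b : Fin m, a < b → 0 < N a b)
    (hNinj : ∀ a b a' b' : Fin m, a < b → a' < b' →
      N a b = N a' b' → a = a' ∧ b = b')
    (z : Fin m → ℝ → ℝ) (zz : Fin m → Fin m → ℝ → ℝ) :
    ∀ t : ℝ, ∀ q ∈ Q,
      (∑ a : Fin m, (z a t + (1/2) * ∑ b, α b a q
          * (((b : ℕ) : ℝ)
              + ∑ c ∈ Finset.univ.filter (fun c => b < c), (zz b c t) ^ 2))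
        • Y a q)
      + (∑ a : Fin m,
          ((1/2) * (avgIterInt m (oscInput m N zz) (2 * π) (Pi.single a 1) t) ^ 2
            - avgIterInt m (oscInput m N zz) (2 * π)
                (Pi.single a 1 + Pi.single a 1) t)
          • symProd n Γ (Y a) (Y a) q)
      + (∑ a : Fin m, ∑ b ∈ Finset.univ.filter (fun b => a < b),
          (avgIterInt m (oscInput m N zz) (2 * π) (Pi.single a 1) t
              * avgIterInt m (oscInput m N zz) (2 * π) (Pi.single b 1) t
            - avgIterInt m (oscInput m N zz) (2 * π)
                (Pi.single a 1 + Pi.single b 1) t)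
          • symProd n Γ (Y a) (Y b) q)
      = (∑ a : Fin m, z a t • Y a q)
        + ∑ a : Fin m, ∑ b ∈ Finset.univ.filter (fun b => a < b),
            zz a b t • symProd n Γ (Y a) (Y b) q := by
  intro t q hq
  have hA : ∀ a : Fin m, avgIterInt m (oscInput m N zz) (2*π) (Pi.single a 1) t = 0 :=
    fun a => avg_single_eq m N hNpos zz t a
  simp only [hA]
  have e3 : (∑ a : Fin m, ∑ b ∈ Finset.univ.filter (fun b => a < b),
      ((0:ℝ) * 0 - avgIterInt m (oscInput m N zz) (2*π)
        (Pi.single a 1 + Pi.single b 1) t) • symProd n Γ (Y a) (Y b) q)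
      = ∑ a : Fin m, ∑ b ∈ Finset.univ.filter (fun b => a < b),
          zz a b t • symProd n Γ (Y a) (Y b) q := by
    refine Finset.sum_congr rfl fun a _ => Finset.sum_congr rfl fun b hb => ?_
    simp only [Finset.mem_filter] at hb
    rw [avg_off_eq m N hNpos hNinj zz t a b hb.2]
    norm_num
  rw [e3]
  have e2 : (∑ a : Fin m, ((1/2) * (0:ℝ)^2 - avgIterInt m (oscInput m N zz) (2*π)
        (Pi.single a 1 + Pi.single a 1) t) • symProd n Γ (Y a) (Y a) q)
      = -∑ a : Fin m, ((1/2) * (((a:ℕ):ℝ)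
          + ∑ c ∈ Finset.univ.filter (fun c => a < c), zz a c t ^ 2))
          • symProd n Γ (Y a) (Y a) q := by
    rw [← Finset.sum_neg_distrib]
    refine Finset.sum_congr rfl fun a _ => ?_
    rw [avg_double_eq m N hNpos hNinj zz t a, ← neg_smul]
    norm_num
  rw [e2]
  have e1 : (∑ a : Fin m, ((1/2) * ∑ b, α b a q * (((b:ℕ):ℝ)
        + ∑ c ∈ Finset.univ.filter (fun c => b < c), zz b c t ^ 2)) • Y a q)
      = ∑ b : Fin m, ((1/2) * (((b:ℕ):ℝ)
          + ∑ c ∈ Finset.univ.filter (fun c => b < c), zz b c t ^ 2))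
          • symProd n Γ (Y b) (Y b) q := by
    set C : Fin m → ℝ := fun b => ((b:ℕ):ℝ)
      + ∑ c ∈ Finset.univ.filter (fun c => b < c), zz b c t ^ 2 with hCdef
    have step1 : ∀ a : Fin m, ((1/2) * ∑ b, α b a q * C b) • Y a q
        = ∑ b, ((1/2 * C b) * α b a q) • Y a q := by
      intro a
      rw [show ((1/2) * ∑ b, α b a q * C b) = ∑ b, (1/2 * C b) * α b a q by
        rw [Finset.mul_sum]; exact Finset.sum_congr rfl fun b _ => by ring,
        Finset.sum_smul]
    calc ∑ a : Fin m, ((1/2) * ∑ b, α b a q * C b) • Y a q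
        = ∑ a : Fin m, ∑ b, ((1/2 * C b) * α b a q) • Y a q :=
          Finset.sum_congr rfl fun a _ => step1 a
      _ = ∑ b : Fin m, ∑ a, ((1/2 * C b) * α b a q) • Y a q := Finset.sum_comm
      _ = ∑ b : Fin m, ((1/2) * C b) • symProd n Γ (Y b) (Y b) q := by
          refine Finset.sum_congr rfl fun b _ => ?_
          rw [hsym b q hq, Finset.smul_sum]
          exact Finset.sum_congr rfl fun a _ => (smul_smul _ _ _).symm
  simp only [add_smul, Finset.sum_add_distrib]
  rw [e1]
  abel

end
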